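/- Let G be a finite p-group. Then G is powerfully nilpotent if and only if the quotient G/G^{p^2} is powerfully nilpotent. -/

import Mathlib

/-- For a subgroup `H` of `G`, the subgroup generated by `n`-th powers of elements of `H`. -/
def sgPow {G : Type*} [Group G] (H : Subgroup G) (n : ℕ) : Subgroup G :=
  Subgroup.closure {x | ∃ h ∈ H, h ^ n = x}

/-- `N` is powerfully nilpotent (w.r.t. the prime `p`): there is an ascending chain of
subgroups `⊥ = H 0 ≤ H 1 ≤ ⋯ ≤ H n = N` with `[H (i+1), N] ≤ (H i)^p`. -/
def PowerfullyNilpotentOn {G : Type*} [Group G] (p : ℕ) (N : Subgroup G) : Prop :=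
  ∃ (n : ℕ) (H : ℕ → Subgroup G), H 0 = ⊥ ∧ H n = N ∧ (∀ i, H i ≤ H (i + 1)) ∧
    (∀ i, H i ≤ N) ∧ ∀ i < n, ⁅H (i + 1), N⁆ ≤ sgPow (H i) p

/-- A group `G` is powerfully nilpotent for the prime `p`: it is powerful
(`[G,G] ≤ G^p` for odd p, `[G,G] ≤ G^4` for p = 2) and has a powerfully central
ascending chain from `⊥` to `⊤`. -/
def PowerfullyNilpotent (p : ℕ) (G : Type*) [Group G] : Prop :=
  ⁅(⊤ : Subgroup G), (⊤ : Subgroup G)⁆ ≤ sgPow ⊤ (if p = 2 then 4 else p) ∧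
    PowerfullyNilpotentOn p (⊤ : Subgroup G)

instance sgPow_top_normal {G : Type*} [Group G] (n : ℕ) :
    (sgPow (⊤ : Subgroup G) n).Normal := by
  constructor
  intro x hx g
  have key : ∀ y ∈ ({x | ∃ h ∈ (⊤ : Subgroup G), h ^ n = x} : Set G),
      g * y * g⁻¹ ∈ sgPow (⊤ : Subgroup G) n := by
    rintro y ⟨h, -, rfl⟩
    have : g * h ^ n * g⁻¹ = (g * h * g⁻¹) ^ n := by simp [conj_pow]
    rw [this]
    exact Subgroup.subset_closure ⟨g * h * g⁻¹, trivial, rfl⟩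
  induction hx using Subgroup.closure_induction with
  | mem y hy => exact key y hy
  | one => simpa using (sgPow (⊤ : Subgroup G) n).one_mem
  | mul y z hy hz ihy ihz =>
      have : g * (y * z) * g⁻¹ = (g * y * g⁻¹) * (g * z * g⁻¹) := by group
      rw [this]; exact Subgroup.mul_mem _ ihy ihz
  | inv y hy ihy =>
      have : g * y⁻¹ * g⁻¹ = (g * y * g⁻¹)⁻¹ := by group
      rw [this]; exact Subgroup.inv_mem _ ihy

/-
A quotient of a powerfully nilpotent group is powerfully nilpotent, which gives one direction.
For the converse, induct on `|G|`; the hypothesis passes to every quotient `G/W`, since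
`(G/W)/(G/W)^{p²}` is a quotient of `G/G^{p²}`, and being powerful lifts directly because
`G^{p²}` lies in `G^p` (in `G^4` for `p = 2`). Let `Z` be the centre.
If `Z^p ≠ 1`, the induction hypothesis for `G/Z^p` gives a chain `C i`, and
`1 ≤ Z ≤ Z·C₀ ≤ Z·C₁ ≤ ⋯` (preimages in `G`) is a powerfully central chain of `G`: the error
term `Z^p` of each step is absorbed by the `p`-th powers of the previous term.
If `Z^p = 1`, the induction hypothesis for `G/Z` gives a chain whose terms have `p`-th powers
in `Z`, by induction along the chain, using `[x^p, g] = [x, g]^p` for central `[x, g]`.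
Then `G^{p²} ≤ Z^p = 1`, so `G ≅ G/G^{p²}`.
-/

open Subgroup

open scoped commutatorElement

section sgPow

variable {G : Type*} [Group G]

theorem pow_mem_sgPow {H : Subgroup G} {h : G} (hh : h ∈ H) (n : ℕ) : h ^ n ∈ sgPow H n :=
  subset_closure ⟨h, hh, rfl⟩

theorem sgPow_le {H K : Subgroup G} {n : ℕ} (hK : ∀ h ∈ H, h ^ n ∈ K) : sgPow H n ≤ K := by
  rw [sgPow, closure_le]
  rintro _ ⟨h, hh, rfl⟩
  exact hK h hh

theorem sgPow_mono {H K : Subgroup G} (h : H ≤ K) (n : ℕ) : sgPow H n ≤ sgPow K n :=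
  sgPow_le fun _ hx => pow_mem_sgPow (h hx) n

theorem sgPow_le_self (H : Subgroup G) (n : ℕ) : sgPow H n ≤ H :=
  sgPow_le fun _ hx => pow_mem hx n

theorem sgPow_le_sgPow_of_dvd (H : Subgroup G) {m n : ℕ} (hmn : m ∣ n) :
    sgPow H n ≤ sgPow H m := by
  obtain ⟨k, rfl⟩ := hmn
  exact sgPow_le fun h hh => pow_mul h m k ▸ pow_mem (pow_mem_sgPow hh m) k

theorem map_sgPow {G' : Type*} [Group G'] (f : G →* G') (H : Subgroup G) (n : ℕ) :
    (sgPow H n).map f = sgPow (H.map f) n := by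
  rw [sgPow, sgPow, MonoidHom.map_closure]
  congr 1
  ext x
  constructor
  · rintro ⟨_, ⟨h, hh, rfl⟩, rfl⟩
    exact ⟨f h, mem_map_of_mem f hh, (map_pow f h n).symm⟩
  · rintro ⟨_, ⟨h, hh, rfl⟩, rfl⟩
    exact ⟨h ^ n, ⟨h, hh, rfl⟩, map_pow f h n⟩

theorem sgPow_top_le_comap {G' : Type*} [Group G'] (f : G →* G') (n : ℕ) :
    sgPow (⊤ : Subgroup G) n ≤ (sgPow (⊤ : Subgroup G') n).comap f :=
  sgPow_le fun h _ => by simpa using pow_mem_sgPow (mem_top (f h)) n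

theorem sgPow_le_powerfulExponent (p : ℕ) :
    sgPow (⊤ : Subgroup G) (p ^ 2) ≤ sgPow ⊤ (if p = 2 then 4 else p) := by
  apply sgPow_le_sgPow_of_dvd
  split_ifs with hp
  · simp [hp]
  · exact dvd_pow_self p two_ne_zero

variable (M : Subgroup G) [M.Normal]

theorem comap_mk'_sgPow (K : Subgroup (G ⧸ M)) (n : ℕ) :
    (sgPow K n).comap (QuotientGroup.mk' M) = sgPow (K.comap (QuotientGroup.mk' M)) n ⊔ M := by
  conv_lhs => rw [← map_comap_eq_self_of_surjective (QuotientGroup.mk'_surjective M) K,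
    ← map_sgPow]
  rw [comap_map_eq, QuotientGroup.ker_mk']

theorem commutator_comap_mk'_le {K₁ K₂ : Subgroup (G ⧸ M)} {n : ℕ}
    (h : ⁅K₂, (⊤ : Subgroup (G ⧸ M))⁆ ≤ sgPow K₁ n) :
    ⁅K₂.comap (QuotientGroup.mk' M), (⊤ : Subgroup G)⁆ ≤
      sgPow (K₁.comap (QuotientGroup.mk' M)) n ⊔ M := by
  rw [← comap_mk'_sgPow, commutator_le]
  intro x hx g _
  rw [mem_comap, map_commutatorElement]
  exact commutator_le.1 h _ (mem_comap.1 hx) _ (mem_top _)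

end sgPow

section Center

variable {G : Type*} [Group G]

theorem normal_of_le_center {A : Subgroup G} (hA : A ≤ center G) : A.Normal where
  conj_mem a ha g := by
    rwa [mem_center_iff.1 (hA ha) g, mul_inv_cancel_right]

theorem commutator_top_eq_bot_of_le_center {A : Subgroup G} (hA : A ≤ center G) :
    ⁅A, (⊤ : Subgroup G)⁆ = ⊥ := by
  rw [commutator_eq_bot_iff_le_centralizer, coe_top, centralizer_univ]
  exact hA

theorem commutator_sup_top_le_of_le_center {A K C : Subgroup G} (hA : A ≤ center G)
    (hK : ⁅K, (⊤ : Subgroup G)⁆ ≤ C) : ⁅A ⊔ K, (⊤ : Subgroup G)⁆ ≤ C := by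
  have : A.Normal := normal_of_le_center hA
  rw [commutator_le]
  intro x hx g _
  obtain ⟨a, ha, k, hk, rfl⟩ := mem_sup_of_normal_left.1 hx
  have hac := mem_center_iff.1 (hA ha)
  rw [commutatorElement_mul_left_eq_conj_mul,
    commutatorElement_eq_one_iff_mul_comm.2 (hac g).symm, mul_one, ← hac, mul_inv_cancel_right]
  exact commutator_le.1 hK k hk g (mem_top g)

theorem commutatorElement_pow_left_of_mem_center {x g : G} (hc : ⁅x, g⁆ ∈ center G) (n : ℕ) :
    ⁅x ^ n, g⁆ = ⁅x, g⁆ ^ n := by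
  have hconj : g * x⁻¹ * g⁻¹ = x⁻¹ * ⁅x, g⁆ := by rw [commutatorElement_def]; group
  have hcomm : Commute x⁻¹ ⁅x, g⁆ := mem_center_iff.1 hc x⁻¹
  calc ⁅x ^ n, g⁆ = x ^ n * (g * x⁻¹ * g⁻¹) ^ n := by
        rw [commutatorElement_def, conj_pow, inv_pow, mul_assoc, mul_assoc, mul_assoc]
    _ = ⁅x, g⁆ ^ n := by rw [hconj, hcomm.mul_pow, inv_pow, mul_inv_cancel_left]

theorem pow_mem_center_of_commutatorElement_mem_center {p : ℕ} (hZ : sgPow (center G) p = ⊥)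
    {x : G} (hx : ∀ g, ⁅x, g⁆ ∈ center G) : x ^ p ∈ center G := by
  rw [mem_center_iff]
  intro g
  have : ⁅x ^ p, g⁆ = 1 := by
    rw [commutatorElement_pow_left_of_mem_center (hx g), ← mem_bot, ← hZ]
    exact pow_mem_sgPow (hx g) p
  exact (commutatorElement_eq_one_iff_mul_comm.1 this).symm

end Center

section PowerfullyNilpotent

variable {G G' : Type*} [Group G] [Group G'] {p : ℕ}

theorem PowerfullyNilpotent.of_surjective {f : G →* G'} (hf : Function.Surjective f)
    (h : PowerfullyNilpotent p G) : PowerfullyNilpotent p G' := by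
  obtain ⟨hpow, n, C, hC0, hCn, hmono, -, hcomm⟩ := h
  have htop : (⊤ : Subgroup G).map f = ⊤ := map_top_of_surjective f hf
  refine ⟨?_, n, fun i => (C i).map f, by simp [hC0], by simp [hCn, htop],
    fun i => map_mono (hmono i), fun _ => le_top, fun i hi => ?_⟩
  · calc ⁅(⊤ : Subgroup G'), ⊤⁆ = map f ⁅(⊤ : Subgroup G), ⊤⁆ := by rw [map_commutator, htop]
      _ ≤ map f (sgPow ⊤ _) := map_mono hpow
      _ = sgPow ⊤ _ := by rw [map_sgPow, htop]
  · calc ⁅(C (i + 1)).map f, (⊤ : Subgroup G')⁆ = map f ⁅C (i + 1), ⊤⁆ := by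
          rw [map_commutator, htop]
      _ ≤ map f (sgPow (C i) p) := map_mono (hcomm i hi)
      _ = sgPow ((C i).map f) p := map_sgPow f (C i) p

theorem PowerfullyNilpotent.quotient_sgPow_of_surjective {f : G →* G'}
    (hf : Function.Surjective f) {n : ℕ}
    (h : PowerfullyNilpotent p (G ⧸ sgPow (⊤ : Subgroup G) n)) :
    PowerfullyNilpotent p (G' ⧸ sgPow (⊤ : Subgroup G') n) :=
  h.of_surjective <| QuotientGroup.map_surjective_of_surjective _ _ f
    ((QuotientGroup.mk'_surjective _).comp hf) (sgPow_top_le_comap f n)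

theorem commutator_top_le_sgPow_of_quotient {N : Subgroup G} [N.Normal] {e : ℕ}
    (hN : N ≤ sgPow ⊤ e) (h : ⁅(⊤ : Subgroup (G ⧸ N)), ⊤⁆ ≤ sgPow (⊤ : Subgroup (G ⧸ N)) e) :
    ⁅(⊤ : Subgroup G), ⊤⁆ ≤ sgPow (⊤ : Subgroup G) e := by
  have := commutator_comap_mk'_le N h
  rw [comap_top] at this
  exact this.trans (sup_le le_rfl hN)

theorem powerfullyNilpotentOn_top_of_quotient {W : Subgroup G} [W.Normal]
    (hW : W ≤ sgPow (center G) p) (h : PowerfullyNilpotentOn p (⊤ : Subgroup (G ⧸ W))) :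
    PowerfullyNilpotentOn p (⊤ : Subgroup G) := by
  obtain ⟨n, C, hC0, hCn, hmono, -, hcomm⟩ := h
  have hWZ : W ≤ center G := hW.trans (sgPow_le_self _ _)
  refine ⟨n + 1, fun j => Nat.casesOn j ⊥ fun i => center G ⊔ (C i).comap (QuotientGroup.mk' W),
    rfl, by simp [hCn], ?_, fun _ => le_top, ?_⟩
  · rintro (_ | i)
    · exact bot_le
    · exact sup_le_sup_left (comap_mono (hmono i)) _
  · rintro (_ | i) hi
    · simp only [hC0, MonoidHom.comap_bot, QuotientGroup.ker_mk', sup_eq_left.2 hWZ,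
        commutator_top_eq_bot_of_le_center le_rfl, bot_le]
    · apply commutator_sup_top_le_of_le_center le_rfl
      exact (commutator_comap_mk'_le W (hcomm i (by omega))).trans
        (sup_le (sgPow_mono le_sup_right p) (hW.trans (sgPow_mono le_sup_left p)))

theorem pow_mem_center_of_powerfullyNilpotentOn_quotient_center (hZ : sgPow (center G) p = ⊥)
    (h : PowerfullyNilpotentOn p (⊤ : Subgroup (G ⧸ center G))) (x : G) : x ^ p ∈ center G := by
  obtain ⟨n, C, hC0, hCn, -, -, hcomm⟩ := h
  suffices ∀ j ≤ n, ∀ x ∈ (C j).comap (QuotientGroup.mk' (center G)), x ^ p ∈ center G from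
    this n le_rfl x (by simp [hCn])
  intro j
  induction j with
  | zero =>
    intro _ x hx
    rw [hC0, MonoidHom.comap_bot, QuotientGroup.ker_mk'] at hx
    exact pow_mem hx p
  | succ j ih =>
    intro hj x hx
    have hpow : sgPow ((C j).comap (QuotientGroup.mk' (center G))) p ≤ center G :=
      sgPow_le (ih (by omega))
    refine pow_mem_center_of_commutatorElement_mem_center hZ fun g => sup_le hpow le_rfl ?_
    exact commutator_le.1 (commutator_comap_mk'_le _ (hcomm j hj)) x hx g (mem_top g)

theorem sgPow_top_sq_eq_bot_of_quotient_center (hZ : sgPow (center G) p = ⊥)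
    (h : PowerfullyNilpotentOn p (⊤ : Subgroup (G ⧸ center G))) :
    sgPow (⊤ : Subgroup G) (p ^ 2) = ⊥ := by
  rw [eq_bot_iff, ← hZ]
  refine sgPow_le fun x _ => ?_
  rw [sq, pow_mul]
  exact pow_mem_sgPow (pow_mem_center_of_powerfullyNilpotentOn_quotient_center hZ h x) p

theorem card_quotient_lt_card [Finite G] {W : Subgroup G} (hW : W ≠ ⊥) :
    Nat.card (G ⧸ W) < Nat.card G := by
  rw [← W.index_mul_card, ← W.index_eq_card]
  exact lt_mul_of_one_lt_right (Nat.pos_of_ne_zero W.index_ne_zero_of_finite)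
    ((one_lt_card_iff_ne_bot W).2 hW)

theorem PowerfullyNilpotent.of_quotient_sgPow_sq [Finite G] [Fact p.Prime] (hpG : IsPGroup p G)
    (h : PowerfullyNilpotent p (G ⧸ sgPow (⊤ : Subgroup G) (p ^ 2))) :
    PowerfullyNilpotent p G := by
  induction hn : Nat.card G using Nat.strong_induction_on generalizing G with
  | _ n ih =>
  have quotient_pn : ∀ (W : Subgroup G) [W.Normal], W ≠ ⊥ → PowerfullyNilpotent p (G ⧸ W) :=
    fun W _ hW => ih _ (hn ▸ card_quotient_lt_card hW) (hpG.to_quotient W)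
      (h.quotient_sgPow_of_surjective (QuotientGroup.mk'_surjective W)) rfl
  by_cases hZ : sgPow (center G) p = ⊥
  · have hG : sgPow (⊤ : Subgroup G) (p ^ 2) = ⊥ := by
      obtain _ | _ := subsingleton_or_nontrivial G
      · exact eq_bot_of_subsingleton _
      · exact sgPow_top_sq_eq_bot_of_quotient_center hZ
          (quotient_pn _ ((nontrivial_iff_ne_bot _).1 hpG.center_nontrivial)).2
    exact h.of_surjective (f := ((QuotientGroup.quotientMulEquivOfEq hG).trans
      QuotientGroup.quotientBot).toMonoidHom) (MulEquiv.surjective _)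
  · have := normal_of_le_center (sgPow_le_self (center G) p)
    exact ⟨commutator_top_le_sgPow_of_quotient (sgPow_le_powerfulExponent p) h.1,
      powerfullyNilpotentOn_top_of_quotient le_rfl (quotient_pn _ hZ).2⟩

end PowerfullyNilpotent

/-- a finite p-group G is powerfully nilpotent iff G/G^{p²} is. -/
theorem stmt7 {G : Type*} [Group G] [Finite G] (p : ℕ) (hp : p.Prime)
    (hpG : IsPGroup p G) :
    PowerfullyNilpotent p G ↔
      PowerfullyNilpotent p (G ⧸ sgPow (⊤ : Subgroup G) (p ^ 2)) := by
  have := Fact.mk hp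
  exact ⟨fun h => h.of_surjective (QuotientGroup.mk'_surjective _),
    fun h => h.of_quotient_sgPow_sq hpG⟩
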